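/- Fix r ≥ 1 and let J ⊆ ΛV be the two-sided ideal generated by all Arnold elements A_{ijk} (i, j, k pairwise distinct) and all elements B_{ij} (i ≠ j). Then the induced algebra endomorphism ΛI maps J into J, and ΛI ∘ ΛI = id on ΛV. Consequently ΛI descends to a well-defined involutive algebra automorphism of the quotient algebra BV^c_C(r) := ΛV / J. -/

import Mathlib

/-!
`ΛI` is the functorial image of the linear involution `I`, hence itself an involution. On the
generators of `J` one computes `ΛI(B_{ij}) = -B_{ij}` and
`ΛI(A_{ijk}) = A_{ijk} - B_{ij} - B_{jk} - B_{ki}`, so `ΛI` maps `J` into `J`; an involutive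
algebra endomorphism preserving a two-sided ideal induces an involutive automorphism of the
quotient.
-/

/-- Index type for the basis of `V`: vectors `u_i`, `ω_{ij}` (for `i < j`), and `θ_i`. -/
inductive BVIdx (r : ℕ) : Type
  | u : Fin r → BVIdx r
  | om : (i j : Fin r) → i < j → BVIdx r
  | th : Fin r → BVIdx r

/-- The ℚ-vector space `V` with basis `u_i`, `ω_{ij}` (`i < j`), `θ_i`. -/
abbrev BVSpace (r : ℕ) : Type := BVIdx r →₀ ℚ

/-- The basis vector `u_i`. -/
noncomputable def uVec (r : ℕ) (i : Fin r) : BVSpace r := Finsupp.single (BVIdx.u i) 1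

/-- The vector `ω_{ij} = ω_{ji}` (defined for `i ≠ j`; set to `0` when `i = j`). -/
noncomputable def omVec (r : ℕ) (i j : Fin r) : BVSpace r :=
  if h : i < j then Finsupp.single (BVIdx.om i j h) 1
  else if h' : j < i then Finsupp.single (BVIdx.om j i h') 1
  else 0

/-- The basis vector `θ_i`. -/
noncomputable def thVec (r : ℕ) (i : Fin r) : BVSpace r := Finsupp.single (BVIdx.th i) 1

/-- The linear involution `I : V → V`, with `I(u_i) = -u_i`,
`I(ω_{ij}) = ω_{ij} - u_i - u_j` and `I(θ_i) = θ_i - 2u_i`. -/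
noncomputable def IMap (r : ℕ) : BVSpace r →ₗ[ℚ] BVSpace r :=
  Finsupp.lift (BVSpace r) ℚ (BVIdx r) fun b =>
    match b with
    | .u i => -uVec r i
    | .om i j _ => omVec r i j - uVec r i - uVec r j
    | .th i => thVec r i - 2 • uVec r i

/-- The exterior algebra `ΛV`. -/
abbrev BVExt (r : ℕ) : Type := ExteriorAlgebra ℚ (BVSpace r)

/-- The element `u_i ∈ ΛV`. -/
noncomputable def uE (r : ℕ) (i : Fin r) : BVExt r := ExteriorAlgebra.ι ℚ (uVec r i)

/-- The element `ω_{ij} ∈ ΛV`. -/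
noncomputable def omE (r : ℕ) (i j : Fin r) : BVExt r := ExteriorAlgebra.ι ℚ (omVec r i j)

/-- The element `θ_i ∈ ΛV`. -/
noncomputable def thE (r : ℕ) (i : Fin r) : BVExt r := ExteriorAlgebra.ι ℚ (thVec r i)

/-- The induced algebra endomorphism `ΛI : ΛV → ΛV`. -/
noncomputable def extI (r : ℕ) : BVExt r →ₐ[ℚ] BVExt r := ExteriorAlgebra.map (IMap r)

/-- The Arnold element `A_{ijk} = ω_{ij}ω_{jk} + ω_{jk}ω_{ki} + ω_{ki}ω_{ij}`. -/
noncomputable def ArnoldA (r : ℕ) (i j k : Fin r) : BVExt r :=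
  omE r i j * omE r j k + omE r j k * omE r k i + omE r k i * omE r i j

/-- The element `B_{ij} = u_i ω_{ij} + ω_{ij} u_j + u_j u_i`. -/
noncomputable def RelB (r : ℕ) (i j : Fin r) : BVExt r :=
  uE r i * omE r i j + omE r i j * uE r j + uE r j * uE r i

/-- The two-sided ideal `J ⊆ ΛV` generated by all Arnold elements `A_{ijk}` (for pairwise
distinct `i, j, k`) and all elements `B_{ij}` (for `i ≠ j`). -/
noncomputable def Jideal (r : ℕ) : TwoSidedIdeal (BVExt r) :=
  TwoSidedIdeal.span
    { x | (∃ i j k : Fin r, i ≠ j ∧ j ≠ k ∧ i ≠ k ∧ x = ArnoldA r i j k) ∨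
          (∃ i j : Fin r, i ≠ j ∧ x = RelB r i j) }

namespace TwoSidedIdeal

variable {R S F : Type*} [NonUnitalNonAssocRing R] [NonUnitalNonAssocRing S] [FunLike F R S]
  [NonUnitalRingHomClass F R S]

lemma map_mem_of_mem_span (f : F) {s : Set R} {I : TwoSidedIdeal S} (hs : ∀ x ∈ s, f x ∈ I)
    {x : R} (hx : x ∈ span s) : f x ∈ I :=
  (mem_comap f).mp (span_le.mpr (fun y hy => (mem_comap f).mpr (hs y hy)) hx)

end TwoSidedIdeal

namespace AlgHom

variable {R A : Type*} [CommSemiring R] [Ring A] [Algebra R A]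

noncomputable def quotientInvolution (f : A →ₐ[R] A) (hf : ∀ x, f (f x) = x)
    (I : TwoSidedIdeal A) (hI : ∀ x ∈ I, f x ∈ I) :
    I.ringCon.Quotient ≃ₐ[R] I.ringCon.Quotient :=
  RingCon.congrₐ R (AlgEquiv.ofAlgHom f f (AlgHom.ext hf) (AlgHom.ext hf)) <| by
    ext x y
    change I.ringCon x y ↔ I.ringCon (f x) (f y)
    simp only [TwoSidedIdeal.rel_iff, ← map_sub]
    exact ⟨hI _, fun h => by simpa only [hf] using hI _ h⟩

@[simp]
lemma quotientInvolution_mk (f : A →ₐ[R] A) (hf : ∀ x, f (f x) = x) (I : TwoSidedIdeal A)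
    (hI : ∀ x ∈ I, f x ∈ I) (x : A) :
    f.quotientInvolution hf I hI (I.ringCon.toQuotient x) = I.ringCon.toQuotient (f x) :=
  rfl

lemma quotientInvolution_quotientInvolution (f : A →ₐ[R] A) (hf : ∀ x, f (f x) = x)
    (I : TwoSidedIdeal A) (hI : ∀ x ∈ I, f x ∈ I) (y : I.ringCon.Quotient) :
    f.quotientInvolution hf I hI (f.quotientInvolution hf I hI y) = y := by
  induction y using Quotient.inductionOn' with
  | h x => exact congrArg I.ringCon.toQuotient (hf x)

end AlgHom

/-- `A_{ijk} = cyclicSum ω_{ij} ω_{jk} ω_{ki}` and `B_{ij} = cyclicSum u_i ω_{ij} u_j`. -/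
def cyclicSum {A : Type*} [Mul A] [Add A] (a b c : A) : A :=
  a * b + b * c + c * a

namespace ExteriorAlgebra

variable {R M : Type*} [CommRing R] [AddCommGroup M] [Module R M]

lemma map_map_of_involutive {f : M →ₗ[R] M} (hf : ∀ v, f (f v) = v)
    (x : ExteriorAlgebra R M) : map f (map f x) = x := by
  have hff : f ∘ₗ f = LinearMap.id := LinearMap.ext hf
  rw [← AlgHom.comp_apply, map_comp_map, hff, map_id, AlgHom.id_apply]

lemma ι_mul_ι_comm (v w : M) : ι R v * ι R w = -(ι R w * ι R v) :=
  eq_neg_of_add_eq_zero_left (ι_add_mul_swap v w)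

lemma cyclicSum_ι_sub (a b c x y z : M) :
    cyclicSum (ι R a - ι R x - ι R y) (ι R b - ι R y - ι R z) (ι R c - ι R z - ι R x)
      = cyclicSum (ι R a) (ι R b) (ι R c) - cyclicSum (ι R x) (ι R a) (ι R y)
        - cyclicSum (ι R y) (ι R b) (ι R z) - cyclicSum (ι R z) (ι R c) (ι R x) := by
  simp only [cyclicSum, sub_mul, mul_sub]
  simp only [ι_mul_ι_comm c a, ι_mul_ι_comm x a, ι_mul_ι_comm x b, ι_mul_ι_comm y b,
    ι_mul_ι_comm y c, ι_mul_ι_comm z a, ι_mul_ι_comm z c, ι_mul_ι_comm y x, ι_mul_ι_comm z x,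
    ι_mul_ι_comm z y, ι_sq_zero, sub_neg_eq_add]
  abel

lemma cyclicSum_neg_ι_sub (a x y : M) :
    cyclicSum (-ι R x) (ι R a - ι R x - ι R y) (-ι R y)
      = -cyclicSum (ι R x) (ι R a) (ι R y) := by
  simp only [cyclicSum, sub_mul, mul_sub, neg_mul, mul_neg]
  simp only [ι_mul_ι_comm y x, ι_sq_zero, neg_neg, sub_neg_eq_add, neg_sub]
  abel

end ExteriorAlgebra

section BV

variable (r : ℕ)

lemma omVec_comm (i j : Fin r) : omVec r j i = omVec r i j := by
  rcases lt_trichotomy i j with h | rfl | h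
  · simp [omVec, h, asymm h]
  · rfl
  · simp [omVec, h, asymm h]

lemma omVec_of_lt {i j : Fin r} (h : i < j) :
    omVec r i j = Finsupp.single (BVIdx.om i j h) 1 := by
  simp [omVec, h]

lemma IMap_uVec (i : Fin r) : IMap r (uVec r i) = -uVec r i := by
  simp [IMap, uVec, Finsupp.lift_apply]

lemma IMap_thVec (i : Fin r) : IMap r (thVec r i) = thVec r i - 2 • uVec r i := by
  simp [IMap, thVec, Finsupp.lift_apply]

lemma IMap_omVec {i j : Fin r} (h : i ≠ j) :
    IMap r (omVec r i j) = omVec r i j - uVec r i - uVec r j := by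
  have of_lt {i j : Fin r} (h : i < j) :
      IMap r (omVec r i j) = omVec r i j - uVec r i - uVec r j := by
    simp [omVec_of_lt r h, IMap, Finsupp.lift_apply]
  rcases h.lt_or_gt with h | h
  · exact of_lt h
  · rw [omVec_comm, of_lt h, omVec_comm]
    abel

lemma IMap_IMap (v : BVSpace r) : IMap r (IMap r v) = v := by
  suffices IMap r ∘ₗ IMap r = LinearMap.id from LinearMap.congr_fun this v
  refine Finsupp.lhom_ext' fun b => LinearMap.ext_ring ?_
  simp only [LinearMap.comp_apply, Finsupp.lsingle_apply, LinearMap.id_apply]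
  rcases b with i | ⟨i, j, h⟩ | i
  · change IMap r (IMap r (uVec r i)) = uVec r i
    simp [IMap_uVec]
  · rw [← omVec_of_lt r h]
    simp only [IMap_omVec r h.ne, map_sub, IMap_uVec]
    abel
  · change IMap r (IMap r (thVec r i)) = thVec r i
    simp only [IMap_thVec, map_sub, map_nsmul, IMap_uVec]
    abel

lemma extI_extI (x : BVExt r) : extI r (extI r x) = x :=
  ExteriorAlgebra.map_map_of_involutive (IMap_IMap r) x

lemma extI_relB {i j : Fin r} (h : i ≠ j) : extI r (RelB r i j) = -RelB r i j := by
  simp only [RelB, map_add, map_mul, uE, omE, extI, ExteriorAlgebra.map_apply_ι, IMap_uVec,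
    IMap_omVec r h, map_neg, map_sub]
  exact ExteriorAlgebra.cyclicSum_neg_ι_sub _ _ _

lemma extI_arnoldA {i j k : Fin r} (hij : i ≠ j) (hjk : j ≠ k) (hik : i ≠ k) :
    extI r (ArnoldA r i j k) = ArnoldA r i j k - RelB r i j - RelB r j k - RelB r k i := by
  simp only [ArnoldA, RelB, map_add, map_mul, uE, omE, extI, ExteriorAlgebra.map_apply_ι,
    IMap_omVec r hij, IMap_omVec r hjk, IMap_omVec r hik.symm, map_sub]
  exact ExteriorAlgebra.cyclicSum_ι_sub _ _ _ _ _ _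

lemma extI_mem_Jideal {x : BVExt r} (hx : x ∈ Jideal r) : extI r x ∈ Jideal r := by
  have relB_mem {i j : Fin r} (h : i ≠ j) : RelB r i j ∈ Jideal r :=
    TwoSidedIdeal.subset_span (Or.inr ⟨i, j, h, rfl⟩)
  refine TwoSidedIdeal.map_mem_of_mem_span (extI r) ?_ hx
  rintro _ (⟨i, j, k, hij, hjk, hik, rfl⟩ | ⟨i, j, h, rfl⟩)
  · rw [extI_arnoldA r hij hjk hik]
    have arnold_mem : ArnoldA r i j k ∈ Jideal r :=
      TwoSidedIdeal.subset_span (Or.inl ⟨i, j, k, hij, hjk, hik, rfl⟩)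
    exact sub_mem (sub_mem (sub_mem arnold_mem (relB_mem hij)) (relB_mem hjk)) (relB_mem hik.symm)
  · rw [extI_relB r h]
    exact neg_mem (relB_mem h)

end BV

theorem extI_descends_general (r : ℕ) :
    (∀ x ∈ Jideal r, extI r x ∈ Jideal r) ∧
    (∀ x : BVExt r, extI r (extI r x) = x) ∧
    ∃ φ : (Jideal r).ringCon.Quotient ≃ₐ[ℚ] (Jideal r).ringCon.Quotient,
      (∀ x : BVExt r,
        φ ((Jideal r).ringCon.toQuotient x) = (Jideal r).ringCon.toQuotient (extI r x)) ∧
      ∀ y : (Jideal r).ringCon.Quotient, φ (φ y) = y :=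
  have preserves : ∀ x ∈ Jideal r, extI r x ∈ Jideal r := fun _ => extI_mem_Jideal r
  ⟨preserves, extI_extI r, (extI r).quotientInvolution (extI_extI r) _ preserves,
    (extI r).quotientInvolution_mk (extI_extI r) _ preserves,
    (extI r).quotientInvolution_quotientInvolution (extI_extI r) _ preserves⟩

/-- `ΛI` maps `J` into `J` and satisfies `ΛI ∘ ΛI = id`; consequently it descends to a
well-defined involutive algebra automorphism of the quotient algebra `BV^c_C(r) = ΛV / J`. -/
theorem extI_descends (r : ℕ) (hr : 1 ≤ r) :
    (∀ x ∈ Jideal r, extI r x ∈ Jideal r) ∧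
    (∀ x : BVExt r, extI r (extI r x) = x) ∧
    ∃ φ : (Jideal r).ringCon.Quotient ≃ₐ[ℚ] (Jideal r).ringCon.Quotient,
      (∀ x : BVExt r,
        φ ((Jideal r).ringCon.toQuotient x) = (Jideal r).ringCon.toQuotient (extI r x)) ∧
      ∀ y : (Jideal r).ringCon.Quotient, φ (φ y) = y :=
  extI_descends_general r
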